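/- Call a vector β ∈ ℝⁿ admissible if ‖β_{|{1,…,k}}‖₂²/k ≤ ‖β‖₂²/n for every k ∈ {1,…,n}. If β ∈ ℝⁿ and δ ∈ ℝᵖ are admissible and ‖β‖₂²/n ≤ ‖δ‖₂²/p, then the concatenated vector (β,δ) ∈ ℝ^{n+p} is admissible. -/

import Mathlib

/-!
Let `a ≤ b` be the mean squares of `β` and `δ`. Admissibility bounds the prefix energies of the
concatenation by the piecewise linear function equal to `k a` for `k ≤ n` and to `n a + (k - n) b`
beyond. As `a ≤ b` this function is convex, so it lies below its chord `k (n a + p b) / (n + p)`,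
which is the bound admissibility of the concatenation asks for.
-/

open Finset

theorem Fin.sum_filter_val_lt_append {M α : Type*} [AddCommMonoid M] {n p : ℕ}
    (f : Fin n → α) (g : Fin p → α) (φ : α → M) (k : ℕ) :
    ∑ j ∈ univ.filter (fun j : Fin (n + p) => (j : ℕ) < k), φ (Fin.append f g j) =
      ∑ j ∈ univ.filter (fun j : Fin n => (j : ℕ) < k), φ (f j) +
        ∑ j ∈ univ.filter (fun j : Fin p => (j : ℕ) < k - n), φ (g j) := by
  simp only [sum_filter, Fin.sum_univ_add, Fin.append_left, Fin.append_right, Fin.val_castAdd,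
    Fin.val_natAdd]
  congr 1
  refine sum_congr rfl fun j _ => ?_
  congr 1
  exact propext (by omega)

theorem le_weighted_average {n p a b : ℝ} (hn : 0 < n) (hp : 0 ≤ p) (hab : a ≤ b) :
    a ≤ (n * a + p * b) / (n + p) := by
  rw [le_div_iff₀ (by positivity)]
  nlinarith

theorem add_mul_le_weighted_average {n p m a b : ℝ} (hn : 0 < n) (hp : 0 ≤ p) (hmp : m ≤ p)
    (hab : a ≤ b) : n * a + m * b ≤ (n + m) * ((n * a + p * b) / (n + p)) := by
  rw [mul_div_assoc', le_div_iff₀ (by positivity)]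
  nlinarith [mul_nonneg (mul_nonneg hn.le (sub_nonneg.2 hmp)) (sub_nonneg.2 hab)]

def Admissible {n : ℕ} (β : Fin n → ℝ) : Prop :=
  ∀ k : ℕ, 1 ≤ k → k ≤ n →
    (∑ j ∈ univ.filter (fun j : Fin n => (j : ℕ) < k), β j ^ 2) / (k : ℝ) ≤
      (∑ j, β j ^ 2) / (n : ℝ)

theorem admissible_iff_le_mul {n : ℕ} {β : Fin n → ℝ} :
    Admissible β ↔ ∀ k : ℕ, 1 ≤ k → k ≤ n →
      ∑ j ∈ univ.filter (fun j : Fin n => (j : ℕ) < k), β j ^ 2 ≤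
        k * ((∑ j, β j ^ 2) / (n : ℝ)) := by
  refine forall_congr' fun k => imp_congr_right fun hk => ?_
  rw [div_le_iff₀' (by exact_mod_cast hk)]

theorem Admissible.append {n p : ℕ} {β : Fin n → ℝ} {δ : Fin p → ℝ} (hn : 0 < n) (hp : 0 < p)
    (hβ : Admissible β) (hδ : Admissible δ)
    (hord : (∑ j, β j ^ 2) / (n : ℝ) ≤ (∑ j, δ j ^ 2) / (p : ℝ)) :
    Admissible (Fin.append β δ) := by
  set a := (∑ j, β j ^ 2) / (n : ℝ)
  set b := (∑ j, δ j ^ 2) / (p : ℝ)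
  have hA : ∑ j, β j ^ 2 = n * a := (mul_div_cancel₀ _ (by positivity)).symm
  have hB : ∑ j, δ j ^ 2 = p * b := (mul_div_cancel₀ _ (by positivity)).symm
  have hn' : (0 : ℝ) < n := by exact_mod_cast hn
  have htotal : (∑ j, Fin.append β δ j ^ 2) / ((n + p : ℕ) : ℝ) = (n * a + p * b) / (n + p) := by
    simp only [Fin.sum_univ_add, Fin.append_left, Fin.append_right, hA, hB, Nat.cast_add]
  rw [admissible_iff_le_mul] at hβ hδ ⊢
  rw [htotal]
  intro k hk1 hk
  rw [Fin.sum_filter_val_lt_append β δ (· ^ 2)]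
  rcases le_or_gt k n with hkn | hnk
  · have hδ_none : ∑ j ∈ univ.filter (fun j : Fin p => (j : ℕ) < k - n), δ j ^ 2 = 0 := by
      simp [Nat.sub_eq_zero_of_le hkn]
    calc _ = ∑ j ∈ univ.filter (fun j : Fin n => (j : ℕ) < k), β j ^ 2 := by
          rw [hδ_none, add_zero]
      _ ≤ k * a := hβ k hk1 hkn
      _ ≤ k * ((n * a + p * b) / (n + p)) := by
        gcongr
        exact le_weighted_average hn' p.cast_nonneg hord
  · obtain ⟨m, rfl⟩ := Nat.exists_eq_add_of_le hnk.le
    have hβ_all : univ.filter (fun j : Fin n => (j : ℕ) < n + m) = univ :=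
      filter_true_of_mem fun j _ => by omega
    have hmp : (m : ℝ) ≤ p := by exact_mod_cast (by omega : m ≤ p)
    rw [hβ_all, hA, Nat.add_sub_cancel_left]
    calc _ ≤ n * a + m * b := by gcongr; exact hδ m (by omega) (by omega)
      _ ≤ _ := by
        push_cast
        exact add_mul_le_weighted_average hn' p.cast_nonneg hmp hord

theorem stmt_18 (n p : ℕ) (hn : 0 < n) (hp : 0 < p)
    (β : Fin n → ℝ) (δ : Fin p → ℝ)
    (hβ : ∀ k : ℕ, 1 ≤ k → k ≤ n →
      (∑ j ∈ Finset.univ.filter (fun j : Fin n => (j : ℕ) < k), β j ^ 2) / (k : ℝ) ≤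
        (∑ j, β j ^ 2) / (n : ℝ))
    (hδ : ∀ k : ℕ, 1 ≤ k → k ≤ p →
      (∑ j ∈ Finset.univ.filter (fun j : Fin p => (j : ℕ) < k), δ j ^ 2) / (k : ℝ) ≤
        (∑ j, δ j ^ 2) / (p : ℝ))
    (hord : (∑ j, β j ^ 2) / (n : ℝ) ≤ (∑ j, δ j ^ 2) / (p : ℝ)) :
    ∀ k : ℕ, 1 ≤ k → k ≤ n + p →
      (∑ j ∈ Finset.univ.filter (fun j : Fin (n + p) => (j : ℕ) < k),
          (Fin.append β δ j) ^ 2) / (k : ℝ) ≤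
        (∑ j, (Fin.append β δ j) ^ 2) / ((n + p : ℕ) : ℝ) :=
  Admissible.append hn hp hβ hδ hord
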